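/- arXiv:2403.15758 — 2 statements merged into one kernel-verified Lean document; each statement's English description precedes it below -/
import Mathlib

section
/- Let ψ ∈ C_c^∞(ℝ^d) be nonnegative, radial, with supp ψ ⊂ {|x| ≤ 1/4} and ∫ ψ = 1, and for t ∈ ℝ set ψ_t(x) = 2^{td} ψ(2^t x). Then there is a constant C, depending only on d and ψ, such that for all j₁, j₂, j₃ ∈ ℤ with j₂ < j₃, ‖ψ_{j₁} * (ψ_{j₃} − ψ_{j₂})‖_{L^∞(ℝ^d)} ≤ C 2^{j₁ d} 2^{j₁ − j₂}. -/
open MeasureTheory Filter Metric Real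
open scoped ENNReal NNReal Topology FourierTransform RealInnerProductSpace

noncomputable section

abbrev Rd (d : ℕ) := EuclideanSpace ℝ (Fin d)

/-- The surface measure on the unit sphere `S^{d-1}`, realized as the
`(d-1)`-dimensional Hausdorff measure restricted to the unit sphere. -/
def sphereMeasure (d : ℕ) : Measure (Rd d) :=
  (μH[(d : ℝ) - 1]).restrict (Metric.sphere (0 : Rd d) 1)

/-- `Ω` is homogeneous of degree zero on `ℝ^d \ {0}`. -/
def HomogZero {d : ℕ} (Ω : Rd d → ℝ) : Prop :=
  ∀ t : ℝ, 0 < t → ∀ x : Rd d, x ≠ 0 → Ω (t • x) = Ω x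

/-- The `L¹(S^{d-1})` norm of `Ω`. -/
def sphereL1 {d : ℕ} (Ω : Rd d → ℝ) : ℝ := ∫ θ, |Ω θ| ∂(sphereMeasure d)

/-- `Ω ∈ L¹(S^{d-1})`. -/
def MemL1Sphere {d : ℕ} (Ω : Rd d → ℝ) : Prop := Integrable Ω (sphereMeasure d)

/-- The `L log L(S^{d-1})` norm of `Ω`. -/
def LlogLNorm {d : ℕ} (Ω : Rd d → ℝ) : ℝ :=
  ∫ θ, |Ω θ| * Real.log (Real.exp 1 + |Ω θ|) ∂(sphereMeasure d)

/-- `Ω ∈ L log L(S^{d-1})`. -/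
def MemLlogL {d : ℕ} (Ω : Rd d → ℝ) : Prop :=
  Integrable (fun θ => |Ω θ| * Real.log (Real.exp 1 + |Ω θ|)) (sphereMeasure d)

/-- `Ω ∈ L (log L)²(S^{d-1})`. -/
def MemLlogL2 {d : ℕ} (Ω : Rd d → ℝ) : Prop :=
  Integrable (fun θ => |Ω θ| * (Real.log (Real.exp 1 + |Ω θ|)) ^ 2) (sphereMeasure d)

/-- The `L^∞(S^{d-1})` norm of `Ω`. -/
def sphereLinf {d : ℕ} (Ω : Rd d → ℝ) : ℝ :=
  (eLpNormEssSup Ω (sphereMeasure d)).toReal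

/-- `Ω ∈ L^∞(S^{d-1})`. -/
def MemLinfSphere {d : ℕ} (Ω : Rd d → ℝ) : Prop :=
  eLpNormEssSup Ω (sphereMeasure d) < ⊤

/-- `Ω` has vanishing moment of order one on the sphere. -/
def VanishingMoment {d : ℕ} (Ω : Rd d → ℝ) : Prop :=
  ∀ k : Fin d, ∫ θ, Ω θ * θ k ∂(sphereMeasure d) = 0

/-- `Φ₂(t) = t log log (e² + t)`. -/
def Phi2 (t : ℝ) : ℝ := t * Real.log (Real.log (Real.exp 2 + t))

/-- `Φ₃(t) = t log log log (e^{e²} + t)`. -/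
def Phi3 (t : ℝ) : ℝ := t * Real.log (Real.log (Real.log (Real.exp (Real.exp 2) + t)))

/-- The Calderón commutator kernel `Ω(x)/|x|^{d+1}`. -/
def calderonKernel {d : ℕ} (Ω : Rd d → ℝ) (x : Rd d) : ℝ := Ω x / ‖x‖ ^ (d + 1)

/-- Maximal Calderón commutator `T^*_{Ω,a}` (with values in `ℝ≥0∞`). -/
def maxCalderon {d : ℕ} (Ω a f : Rd d → ℝ) (x : Rd d) : ℝ≥0∞ :=
  ⨆ ε : {ε : ℝ // 0 < ε},
    ENNReal.ofReal |∫ y in {y : Rd d | (ε : ℝ) < ‖x - y‖},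
      calderonKernel Ω (x - y) * (a x - a y) * f y|

/-- Lacunary maximal Calderón commutator `T^{**}_{Ω,a}`. -/
def lacMaxCalderon {d : ℕ} (Ω a f : Rd d → ℝ) (x : Rd d) : ℝ≥0∞ :=
  ⨆ k : ℤ,
    ENNReal.ofReal |∫ y in {y : Rd d | (2 : ℝ) ^ k ≤ ‖x - y‖},
      calderonKernel Ω (x - y) * (a x - a y) * f y|

/-- Maximal homogeneous singular integral `T^*_Ω`. -/
def maxSingular {d : ℕ} (Ω f : Rd d → ℝ) (x : Rd d) : ℝ≥0∞ :=
  ⨆ ε : {ε : ℝ // 0 < ε},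
    ENNReal.ofReal |∫ y in {y : Rd d | (ε : ℝ) < ‖y‖}, Ω y / ‖y‖ ^ d * f (x - y)|

/-- `f` is radial. -/
def IsRadial {d : ℕ} (f : Rd d → ℝ) : Prop := ∀ x y : Rd d, ‖x‖ = ‖y‖ → f x = f y

/-- The dilate `ψ_t(x) = 2^{td} ψ(2^t x)`. -/
def psiT {d : ℕ} (ψ : Rd d → ℝ) (t : ℝ) : Rd d → ℝ :=
  fun x => (2 : ℝ) ^ (t * d) * ψ ((2 : ℝ) ^ t • x)

/-- Convolution `(f * g)(x) = ∫ f(x - y) g(y) dy`. -/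
def convR {d : ℕ} (f g : Rd d → ℝ) (x : Rd d) : ℝ := ∫ y, f (x - y) * g y

/-- Hypotheses on the mollifier `ψ`: nonnegative, radial, smooth, compactly supported in
`{|x| ≤ 1/4}`, with total integral one. -/
def PsiHyp {d : ℕ} (ψ : Rd d → ℝ) : Prop :=
  (∀ x, 0 ≤ ψ x) ∧ ContDiff ℝ (⊤ : ℕ∞) ψ ∧ HasCompactSupport ψ ∧ IsRadial ψ ∧
    tsupport ψ ⊆ Metric.closedBall 0 (1 / 4) ∧ (∫ x, ψ x) = 1

/-- Hypotheses on the dyadic cut-off function `η`: smooth, supported in `{1/2 ≤ |x| ≤ 2}`,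
with `Σ_j η(2^{-j} x) = 1` for `x ≠ 0`. -/
def EtaHyp {d : ℕ} (η : Rd d → ℝ) : Prop :=
  ContDiff ℝ (⊤ : ℕ∞) η ∧ HasCompactSupport η ∧
    tsupport η ⊆ {x : Rd d | 1 / 2 ≤ ‖x‖ ∧ ‖x‖ ≤ 2} ∧
    ∀ x : Rd d, x ≠ 0 → HasSum (fun j : ℤ => η ((2 : ℝ) ^ (-j) • x)) 1

/-- `K_j(x) = Ω(x)/|x|^{d+1} · η(2^{-j}x)`. -/
def Kj {d : ℕ} (Ω η : Rd d → ℝ) (j : ℤ) (x : Rd d) : ℝ :=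
  calderonKernel Ω x * η ((2 : ℝ) ^ (-j) • x)

/-- `Ω_i = Ω χ_{E_i}` where `E_0 = {|Ω| ≤ 1}` and `E_i = {2^{i-1} < |Ω| ≤ 2^i}` for `i ≥ 1`. -/
def OmegaTrunc {d : ℕ} (Ω : Rd d → ℝ) (i : ℕ) (θ : Rd d) : ℝ :=
  if i = 0 then (if |Ω θ| ≤ 1 then Ω θ else 0)
  else (if (2 : ℝ) ^ ((i : ℤ) - 1) < |Ω θ| ∧ |Ω θ| ≤ 2 ^ i then Ω θ else 0)

/-- `K_j^i(x) = Ω_i(x/|x|)/|x|^{d+1} · η(2^{-j}x)`. -/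
def Kji {d : ℕ} (Ω η : Rd d → ℝ) (i : ℕ) (j : ℤ) (x : Rd d) : ℝ :=
  OmegaTrunc Ω i (‖x‖⁻¹ • x) / ‖x‖ ^ (d + 1) * η ((2 : ℝ) ^ (-j) • x)

/-- The dyadic cube of generation `c` indexed by `n ∈ ℤ^d`. -/
def dyadicCube {d : ℕ} (c : ℤ) (n : Fin d → ℤ) : Set (Rd d) :=
  {x : Rd d | ∀ i : Fin d, (2 : ℝ) ^ c * n i ≤ x i ∧ x i < (2 : ℝ) ^ c * (n i + 1)}

/-- The (uncentered over centered balls) Hardy–Littlewood maximal operator, `ℝ≥0∞`-valued. -/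
def HLMax {d : ℕ} (f : Rd d → ℝ) (x : Rd d) : ℝ≥0∞ :=
  ⨆ r : {r : ℝ // 0 < r},
    (volume (Metric.ball x (r : ℝ)))⁻¹ * ∫⁻ y in Metric.ball x (r : ℝ), ENNReal.ofReal |f y|

/-- Hardy–Littlewood maximal operator for `ℝ≥0∞`-valued functions. -/
def HLMaxE {d : ℕ} (f : Rd d → ℝ≥0∞) (x : Rd d) : ℝ≥0∞ :=
  ⨆ r : {r : ℝ // 0 < r},
    (volume (Metric.ball x (r : ℝ)))⁻¹ * ∫⁻ y in Metric.ball x (r : ℝ), f y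


section PsiAux
variable {d : ℕ} {ψ : Rd d → ℝ}

lemma psiT_cont (hψ : PsiHyp ψ) (t : ℝ) : Continuous (psiT ψ t) :=
  continuous_const.mul (hψ.2.1.continuous.comp (continuous_const_smul _))

lemma psiT_hcs (hψ : PsiHyp ψ) (t : ℝ) : HasCompactSupport (psiT ψ t) :=
  (hψ.2.2.1.comp_smul (by positivity : (2:ℝ)^t ≠ 0)).mul_left

lemma psiT_nonneg (hψ : PsiHyp ψ) (t : ℝ) (x : Rd d) : 0 ≤ psiT ψ t x :=
  mul_nonneg (by positivity) (hψ.1 _)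

lemma psiT_integrable (hψ : PsiHyp ψ) (t : ℝ) : Integrable (psiT ψ t) :=
  (psiT_cont hψ t).integrable_of_hasCompactSupport (psiT_hcs hψ t)

lemma psiT_integral (hψ : PsiHyp ψ) (t : ℝ) : ∫ x, psiT ψ t x = 1 := by
  unfold psiT
  rw [MeasureTheory.integral_const_mul, MeasureTheory.Measure.integral_comp_smul volume ψ ((2:ℝ)^t),
    hψ.2.2.2.2.2]
  have hd : Module.finrank ℝ (Rd d) = d := finrank_euclideanSpace_fin
  rw [hd, smul_eq_mul, mul_one]
  have : ((2:ℝ)^t)^(d:ℕ) = (2:ℝ)^(t * d) := by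
    rw [← Real.rpow_natCast ((2:ℝ)^t) d, ← Real.rpow_mul (by norm_num)]
  rw [this, abs_of_nonneg (by positivity)]
  have h2 : (0:ℝ) < (2:ℝ)^(t*d) := Real.rpow_pos_of_pos (by norm_num) _
  field_simp

lemma psiT_supp (hψ : PsiHyp ψ) (t : ℝ) {y : Rd d} (hy : psiT ψ t y ≠ 0) :
    ‖y‖ ≤ (2:ℝ)^(-t) / 4 := by
  have h : ψ ((2:ℝ)^t • y) ≠ 0 := fun h => hy (by simp [psiT, h])
  have h2 := hψ.2.2.2.2.1 (subset_tsupport _ h)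
  rw [Metric.mem_closedBall, dist_zero_right, norm_smul, Real.norm_eq_abs,
    abs_of_nonneg (by positivity : (0:ℝ) ≤ (2:ℝ)^t)] at h2
  have hp : (0:ℝ) < (2:ℝ)^t := Real.rpow_pos_of_pos (by norm_num) _
  rw [Real.rpow_neg (by norm_num)]
  rw [div_eq_mul_inv, mul_comm]
  calc ‖y‖ = ((2:ℝ)^t)⁻¹ * ((2:ℝ)^t * ‖y‖) := by field_simp
  _ ≤ ((2:ℝ)^t)⁻¹ * (1/4) := by
      apply mul_le_mul_of_nonneg_left h2 (by positivity)
  _ = 4⁻¹ * ((2:ℝ)^t)⁻¹ := by ring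

lemma psiT_moment (hψ : PsiHyp ψ) (t : ℝ) :
    ∫ y, ‖y‖ * psiT ψ t y ≤ (2:ℝ)^(-t) / 4 := by
  have h1 : ∫ y, ((2:ℝ)^(-t)/4) * psiT ψ t y = (2:ℝ)^(-t)/4 := by
    rw [MeasureTheory.integral_const_mul, psiT_integral hψ, mul_one]
  rw [← h1]
  apply integral_mono
  · exact ((continuous_norm.mul (psiT_cont hψ t)).integrable_of_hasCompactSupport
      (psiT_hcs hψ t).mul_left)
  · exact (psiT_integrable hψ t).const_mul _
  · intro y
    by_cases h : psiT ψ t y = 0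
    · simp [h]
    · exact mul_le_mul_of_nonneg_right (psiT_supp hψ t h) (psiT_nonneg hψ t y)

end PsiAux

/-- `‖ψ_{j₁} * (ψ_{j₃} − ψ_{j₂})‖_{L^∞} ≲ 2^{j₁ d} 2^{j₁ − j₂}` for `j₂ < j₃`. -/
theorem psiT_conv_diff_Linfty (d : ℕ) (ψ : Rd d → ℝ) (hψ : PsiHyp ψ) :
    ∃ C : ℝ, 0 < C ∧ ∀ j₁ j₂ j₃ : ℤ, j₂ < j₃ → ∀ x : Rd d,
      |convR (psiT ψ (j₁ : ℝ)) (fun y => psiT ψ (j₃ : ℝ) y - psiT ψ (j₂ : ℝ) y) x|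
        ≤ C * (2 : ℝ) ^ (j₁ * d) * (2 : ℝ) ^ (j₁ - j₂) := by
  obtain ⟨K, hK⟩ := hψ.2.1.lipschitzWith_of_hasCompactSupport hψ.2.2.1 (by simp)
  refine ⟨(K:ℝ) + 1, by positivity, ?_⟩
  intro j₁ j₂ j₃ hj x
  set f := psiT ψ (j₁:ℝ) with hf
  set g := fun y : Rd d => psiT ψ (j₃:ℝ) y - psiT ψ (j₂:ℝ) y with hgdef
  have hi2 := psiT_integrable hψ (j₂:ℝ)
  have hi3 := psiT_integrable hψ (j₃:ℝ)
  have hg_hcs : HasCompactSupport g := by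
    have hng : HasCompactSupport (fun y : Rd d => -psiT ψ (j₂:ℝ) y) :=
      (psiT_hcs hψ (j₂:ℝ)).comp_left (g := fun x : ℝ => -x) neg_zero
    have := ((psiT_hcs hψ (j₃:ℝ)).add hng)
    rw [hgdef]; simp only [sub_eq_add_neg]; exact this
  have hg_cont : Continuous g := (psiT_cont hψ _).sub (psiT_cont hψ _)
  have hg_int : Integrable g := hi3.sub hi2
  have hg0 : ∫ y, g y = 0 := by
    rw [hgdef, integral_sub hi3 hi2, psiT_integral hψ, psiT_integral hψ, sub_self]
  have hcont_f : Continuous f := psiT_cont hψ _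
  have hint1 : Integrable (fun y => f (x - y) * g y) :=
    ((hcont_f.comp (continuous_const.sub continuous_id)).mul
      hg_cont).integrable_of_hasCompactSupport hg_hcs.mul_left
  have hint2 : Integrable (fun y => (f (x - y) - f x) * g y) :=
    (((hcont_f.comp (continuous_const.sub continuous_id)).sub continuous_const).mul
      hg_cont).integrable_of_hasCompactSupport hg_hcs.mul_left
  have key : convR f g x = ∫ y, (f (x - y) - f x) * g y := by
    have heq : ∀ y : Rd d, (f (x - y) - f x) * g y = f (x - y) * g y - f x * g y :=
      fun y => by ring
    simp_rw [heq]
    rw [integral_sub hint1 (hg_int.const_mul _), MeasureTheory.integral_const_mul, hg0,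
      mul_zero, sub_zero]
    rfl
  set L : ℝ := (2:ℝ)^((j₁:ℝ)*(d:ℝ)) * ((K:ℝ) * (2:ℝ)^(j₁:ℝ)) with hL
  have hLnn : 0 ≤ L := by positivity
  have hptwise : ∀ y : Rd d, |(f (x - y) - f x) * g y|
      ≤ (L * ‖y‖) * (psiT ψ (j₃:ℝ) y + psiT ψ (j₂:ℝ) y) := by
    intro y
    rw [abs_mul]
    have hlip : |f (x - y) - f x| ≤ L * ‖y‖ := by
      have h1 : f (x - y) - f x
          = (2:ℝ)^((j₁:ℝ)*(d:ℝ)) * (ψ ((2:ℝ)^(j₁:ℝ) • (x - y)) - ψ ((2:ℝ)^(j₁:ℝ) • x)) := by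
        simp only [hf, psiT]; ring
      rw [h1, abs_mul, abs_of_nonneg (by positivity : (0:ℝ) ≤ (2:ℝ)^((j₁:ℝ)*(d:ℝ)))]
      have h2 := hK.dist_le_mul ((2:ℝ)^(j₁:ℝ) • (x - y)) ((2:ℝ)^(j₁:ℝ) • x)
      rw [Real.dist_eq, dist_eq_norm] at h2
      have h3 : (2:ℝ)^(j₁:ℝ) • (x - y) - (2:ℝ)^(j₁:ℝ) • x = (2:ℝ)^(j₁:ℝ) • (-y) := by
        rw [← smul_sub]; congr 1; abel
      rw [h3, norm_smul, norm_neg, Real.norm_eq_abs,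
        abs_of_nonneg (by positivity : (0:ℝ) ≤ (2:ℝ)^(j₁:ℝ))] at h2
      calc (2:ℝ)^((j₁:ℝ)*(d:ℝ)) * |ψ ((2:ℝ)^(j₁:ℝ) • (x - y)) - ψ ((2:ℝ)^(j₁:ℝ) • x)|
          ≤ (2:ℝ)^((j₁:ℝ)*(d:ℝ)) * ((K:ℝ) * ((2:ℝ)^(j₁:ℝ) * ‖y‖)) :=
            mul_le_mul_of_nonneg_left h2 (by positivity)
        _ = L * ‖y‖ := by rw [hL]; ring
    have hgy : |g y| ≤ psiT ψ (j₃:ℝ) y + psiT ψ (j₂:ℝ) y := by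
      calc |g y| ≤ |psiT ψ (j₃:ℝ) y| + |psiT ψ (j₂:ℝ) y| := abs_sub _ _
      _ = psiT ψ (j₃:ℝ) y + psiT ψ (j₂:ℝ) y := by
          rw [abs_of_nonneg (psiT_nonneg hψ _ _), abs_of_nonneg (psiT_nonneg hψ _ _)]
    exact mul_le_mul hlip hgy (abs_nonneg _) (by positivity)
  have hA3 := psiT_moment hψ (j₃:ℝ)
  have hA2 := psiT_moment hψ (j₂:ℝ)
  have hbound : |∫ y, (f (x - y) - f x) * g y|
      ≤ L * ((2:ℝ)^(-(j₃:ℝ))/4 + (2:ℝ)^(-(j₂:ℝ))/4) := by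
    have him3 : Integrable (fun y : Rd d => ‖y‖ * psiT ψ (j₃:ℝ) y) :=
      (continuous_norm.mul (psiT_cont hψ _)).integrable_of_hasCompactSupport
        (psiT_hcs hψ _).mul_left
    have him2 : Integrable (fun y : Rd d => ‖y‖ * psiT ψ (j₂:ℝ) y) :=
      (continuous_norm.mul (psiT_cont hψ _)).integrable_of_hasCompactSupport
        (psiT_hcs hψ _).mul_left
    have habs : |∫ y, (f (x - y) - f x) * g y| ≤ ∫ y, |(f (x - y) - f x) * g y| := by
      simpa only [Real.norm_eq_abs] using
        norm_integral_le_integral_norm (μ := volume) (fun y => (f (x - y) - f x) * g y)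
    calc |∫ y, (f (x - y) - f x) * g y| ≤ ∫ y, |(f (x - y) - f x) * g y| := habs
      _ ≤ ∫ y, (L * ‖y‖) * (psiT ψ (j₃:ℝ) y + psiT ψ (j₂:ℝ) y) := by
          apply integral_mono hint2.abs ?_ hptwise
          exact ((continuous_const.mul continuous_norm).mul
            ((psiT_cont hψ _).add (psiT_cont hψ _))).integrable_of_hasCompactSupport
            ((psiT_hcs hψ _).add (psiT_hcs hψ _)).mul_left
      _ = L * ((∫ y, ‖y‖ * psiT ψ (j₃:ℝ) y) + ∫ y, ‖y‖ * psiT ψ (j₂:ℝ) y) := by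
          have heq : ∀ y : Rd d, (L * ‖y‖) * (psiT ψ (j₃:ℝ) y + psiT ψ (j₂:ℝ) y)
              = L * (‖y‖ * psiT ψ (j₃:ℝ) y + ‖y‖ * psiT ψ (j₂:ℝ) y) := fun y => by ring
          simp_rw [heq]
          rw [MeasureTheory.integral_const_mul, integral_add him3 him2]
      _ ≤ L * ((2:ℝ)^(-(j₃:ℝ))/4 + (2:ℝ)^(-(j₂:ℝ))/4) :=
          mul_le_mul_of_nonneg_left (add_le_add hA3 hA2) hLnn
  have hfinal : L * ((2:ℝ)^(-(j₃:ℝ))/4 + (2:ℝ)^(-(j₂:ℝ))/4)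
      ≤ ((K:ℝ)+1) * (2:ℝ)^((j₁:ℝ)*(d:ℝ)) * (2:ℝ)^((j₁:ℝ)-(j₂:ℝ)) := by
    have h32 : (2:ℝ)^(-(j₃:ℝ)) ≤ (2:ℝ)^(-(j₂:ℝ)) := by
      apply Real.rpow_le_rpow_of_exponent_le (by norm_num)
      have : (j₂:ℝ) ≤ (j₃:ℝ) := by exact_mod_cast hj.le
      linarith
    have hpow : (2:ℝ)^((j₁:ℝ)-(j₂:ℝ)) = (2:ℝ)^(j₁:ℝ) * (2:ℝ)^(-(j₂:ℝ)) := by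
      rw [← Real.rpow_add (by norm_num)]; ring_nf
    rw [hpow, hL]
    have hP : (0:ℝ) < (2:ℝ)^((j₁:ℝ)*(d:ℝ)) := Real.rpow_pos_of_pos (by norm_num) _
    have hQ : (0:ℝ) < (2:ℝ)^(j₁:ℝ) := Real.rpow_pos_of_pos (by norm_num) _
    have hB : (0:ℝ) < (2:ℝ)^(-(j₂:ℝ)) := Real.rpow_pos_of_pos (by norm_num) _
    have hK0 : (0:ℝ) ≤ (K:ℝ) := K.coe_nonneg
    nlinarith [mul_pos (mul_pos hP hQ) hB, mul_nonneg (mul_nonneg hP.le hQ.le) hB.le,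
      mul_nonneg (mul_nonneg (mul_nonneg hK0 hP.le) hQ.le) hB.le]
  have hzp1 : (2:ℝ)^(j₁ * (d:ℤ)) = (2:ℝ)^((j₁:ℝ)*(d:ℝ)) := by
    rw [← Real.rpow_intCast (2:ℝ) (j₁ * (d:ℤ))]; push_cast; ring_nf
  have hzp2 : (2:ℝ)^(j₁ - j₂) = (2:ℝ)^((j₁:ℝ)-(j₂:ℝ)) := by
    rw [← Real.rpow_intCast (2:ℝ) (j₁ - j₂)]; push_cast; ring_nf
  rw [hzp1, hzp2, key]
  exact hbound.trans hfinal


end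
end

section
/- Let Ω be homogeneous of degree zero and integrable on S^{d-1}, let a : ℝ^d → ℝ satisfy ∇a ∈ L^∞(ℝ^d), and let ι ∈ (0,1). Then there is a constant C, depending only on d, ψ, η and ‖∇a‖_{L^∞}, such that for all i ∈ ℕ∪{0}, all j ∈ ℤ, all m, s ∈ ℕ, and all f ∈ L¹(ℝ^d): ‖𝓙^i_{m,a;j} f − 𝓗^i_{m,a;j} f‖_{L¹(ℝ^d)} ≤ C 2^{−ι s} ‖Ω_i‖_{L¹(S^{d-1})} ‖f‖_{L¹(ℝ^d)}. -/
open MeasureTheory Filter Metric Real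
open scoped ENNReal NNReal Topology FourierTransform RealInnerProductSpace

noncomputable section

/-- `K̃^i_{j,m} = K_j^i * (ψ_{2^m−j} − ψ_{2^{m−1}−j})`. -/
def KtildeIJM {d : ℕ} (Ω η ψ : Rd d → ℝ) (i : ℕ) (j : ℤ) (m : ℕ) (x : Rd d) : ℝ :=
  convR (Kji Ω η i j)
    (fun y => psiT ψ ((2 : ℝ) ^ (m : ℝ) - (j : ℝ)) y -
      psiT ψ ((2 : ℝ) ^ ((m : ℝ) - 1) - (j : ℝ)) y) x

/-- `R^j_{s,a}(x,y) = ∫ ψ_{ιs+3−j}(x−z)(a(z) − a(y)) dz`. -/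
def Rsa {d : ℕ} (ψ a : Rd d → ℝ) (ι : ℝ) (s : ℕ) (j : ℤ) (x y : Rd d) : ℝ :=
  ∫ z : Rd d, psiT ψ (ι * s + 3 - (j : ℝ)) (x - z) * (a z - a y)

/-- `𝓗^i_{m,a;j} f(x) = ∫ K̃^i_{j,m}(x−y)(a(x)−a(y)) f(y) dy`. -/
def Hop {d : ℕ} (Ω η ψ a : Rd d → ℝ) (i : ℕ) (m : ℕ) (j : ℤ) (f : Rd d → ℝ)
    (x : Rd d) : ℝ :=
  ∫ y : Rd d, KtildeIJM Ω η ψ i j m (x - y) * (a x - a y) * f y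

/-- `𝓙^i_{m,a;j} f(x) = ∫ K̃^i_{j,m}(x−y) R^j_{s,a}(x,y) f(y) dy`. -/
def Jop {d : ℕ} (Ω η ψ a : Rd d → ℝ) (ι : ℝ) (s : ℕ) (i : ℕ) (m : ℕ) (j : ℤ)
    (f : Rd d → ℝ) (x : Rd d) : ℝ :=
  ∫ y : Rd d, KtildeIJM Ω η ψ i j m (x - y) * Rsa ψ a ι s j x y * f y

/-! ### Auxiliary lemmas for the proof -/

theorem ofReal_norm_eq_coe_nnnorm {E : Type*} [SeminormedAddGroup E] (a : E) :
    ENNReal.ofReal ‖a‖ = (‖a‖₊ : ℝ≥0∞) := ENNReal.ofReal_eq_coe_nnreal _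

namespace JopAux

open Set

variable {d : ℕ}

/-- The truncated cone over a subset of the sphere. -/
def cone (d : ℕ) (B : Set (Rd d)) : Set (Rd d) :=
  {x : Rd d | x ≠ 0 ∧ ‖x‖ ≤ 2 ∧ ‖x‖⁻¹ • x ∈ B}

lemma cone_ball (hd : 2 ≤ d) {θ0 : Rd d} (hθ0 : ‖θ0‖ = 1) {δ : ℝ} (hδ0 : 0 < δ) (hδ1 : δ ≤ 1)
    {B : Set (Rd d)} (hB : B ⊆ Metric.closedBall θ0 δ) :
    volume (cone d B) ≤
      ENNReal.ofReal ((3 : ℝ) ^ (d + 1) * δ ^ (d - 1)) * volume (Metric.ball (0 : Rd d) 1) := by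
  have hcover : cone d B ⊆
      ⋃ k ∈ Finset.range (⌊(2 : ℝ) / δ⌋₊ + 1), Metric.closedBall (((k : ℝ) * δ) • θ0) (3 * δ) := by
    rintro x ⟨hx0, hx2, hxB⟩
    have hr0 : 0 < ‖x‖ := norm_pos_iff.2 hx0
    have hθ : dist (‖x‖⁻¹ • x) θ0 ≤ δ := hB hxB
    refine Set.mem_biUnion (Finset.mem_range.2 (Nat.lt_succ_of_le (Nat.floor_le_floor ?_)))
      (?_ : dist x ((((⌊‖x‖ / δ⌋₊ : ℕ) : ℝ) * δ) • θ0) ≤ 3 * δ)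
    · gcongr
    · set k : ℕ := ⌊‖x‖ / δ⌋₊
      have hxr : x = ‖x‖ • (‖x‖⁻¹ • x) := by
        rw [smul_smul, mul_inv_cancel₀ hr0.ne', one_smul]
      have h1 : dist x (‖x‖ • θ0) ≤ 2 * δ := by
        calc dist x (‖x‖ • θ0) = ‖x‖ * dist (‖x‖⁻¹ • x) θ0 := by
              rw [dist_eq_norm, dist_eq_norm]
              nth_rewrite 1 [hxr]
              rw [← smul_sub, norm_smul, Real.norm_eq_abs, abs_of_pos hr0]
          _ ≤ 2 * δ := by
              apply mul_le_mul hx2 hθ dist_nonneg (by norm_num)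
      have hk1 : (k : ℝ) * δ ≤ ‖x‖ := by
        have hfl : (k : ℝ) ≤ ‖x‖ / δ := Nat.floor_le (by positivity)
        calc (k : ℝ) * δ ≤ ‖x‖ / δ * δ := by gcongr
          _ = ‖x‖ := by field_simp
      have hk2 : ‖x‖ ≤ (k : ℝ) * δ + δ := by
        have := (Nat.lt_succ_floor (‖x‖ / δ)).le
        have h' : ‖x‖ / δ ≤ (k : ℝ) + 1 := by exact_mod_cast this
        calc ‖x‖ = ‖x‖ / δ * δ := by field_simp
          _ ≤ ((k : ℝ) + 1) * δ := by gcongr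
          _ = (k : ℝ) * δ + δ := by ring
      have h2 : dist (‖x‖ • θ0) (((k : ℝ) * δ) • θ0) ≤ δ := by
        rw [dist_eq_norm, ← sub_smul, norm_smul, Real.norm_eq_abs, hθ0, mul_one,
          abs_of_nonneg (by linarith)]
        linarith
      calc dist x ((((k : ℕ) : ℝ) * δ) • θ0) ≤
            dist x (‖x‖ • θ0) + dist (‖x‖ • θ0) (((k : ℝ) * δ) • θ0) := dist_triangle _ _ _
        _ ≤ 2 * δ + δ := add_le_add h1 h2
        _ = 3 * δ := by ring
  have hd1 : 1 ≤ d := le_trans (by norm_num) hd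
  calc volume (cone d B)
      ≤ ∑ k ∈ Finset.range (⌊(2 : ℝ) / δ⌋₊ + 1),
          volume (Metric.closedBall (((k : ℝ) * δ) • θ0) (3 * δ)) :=
        le_trans (measure_mono hcover) (measure_biUnion_finset_le _ _)
    _ = (⌊(2 : ℝ) / δ⌋₊ + 1 : ℕ) •
          (ENNReal.ofReal ((3 * δ) ^ d) * volume (Metric.ball (0 : Rd d) 1)) := by
        rw [Finset.sum_congr rfl fun k _ => ?_, Finset.sum_const, Finset.card_range]
        rw [Measure.addHaar_closedBall _ _ (by positivity), finrank_euclideanSpace_fin]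
    _ ≤ ENNReal.ofReal (3 / δ) * (ENNReal.ofReal ((3 * δ) ^ d) *
          volume (Metric.ball (0 : Rd d) 1)) := by
        rw [nsmul_eq_mul]
        refine mul_le_mul_left ?_ _
        rw [← ENNReal.ofReal_natCast]
        refine ENNReal.ofReal_le_ofReal ?_
        push_cast
        have : (⌊(2 : ℝ) / δ⌋₊ : ℝ) ≤ 2 / δ := Nat.floor_le (by positivity)
        have h1δ : (1 : ℝ) ≤ 1 / δ := by rw [le_div_iff₀ hδ0]; linarith
        have h3 : (2 : ℝ) / δ + 1 / δ = 3 / δ := by ring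
        linarith
    _ = ENNReal.ofReal ((3 : ℝ) ^ (d + 1) * δ ^ (d - 1)) * volume (Metric.ball (0 : Rd d) 1) := by
        rw [← mul_assoc, ← ENNReal.ofReal_mul (by positivity)]
        congr 2
        have hδd : δ ^ d = δ ^ (d - 1) * δ := by
          conv_lhs => rw [← Nat.sub_add_cancel hd1]
          rw [pow_succ]
        rw [mul_pow, hδd]
        field_simp
        ring

lemma cone_diam (hd : 2 ≤ d) {B : Set (Rd d)} (hB : B ⊆ Metric.sphere (0 : Rd d) 1)
    {e : ℝ≥0∞} (he : e ≤ 1) (hBe : EMetric.diam B ≤ e) :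
    volume (cone d B) ≤ ENNReal.ofReal ((3 : ℝ) ^ (d + 1)) * volume (Metric.ball (0 : Rd d) 1)
      * e ^ ((d : ℝ) - 1) := by
  rcases B.eq_empty_or_nonempty with rfl | ⟨θ0, hθ0B⟩
  · have : cone d (∅ : Set (Rd d)) = ∅ := by
      ext x; simp [cone]
    simp [this]
  have hθ0 : ‖θ0‖ = 1 := by simpa using hB hθ0B
  have hee : e ≠ ∞ := ne_top_of_le_ne_top ENNReal.one_ne_top he
  rcases eq_or_ne e 0 with rfl | he0
  · -- `B` is a single point, the cone is inside a line, which is null since `d ≥ 2`.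
    have hBsub : B ⊆ {θ0} := by
      intro θ hθ
      have h1 : edist θ θ0 = 0 :=
        le_antisymm (le_trans (EMetric.edist_le_diam_of_mem hθ hθ0B) (le_trans hBe le_rfl))
          zero_le
      simpa [edist_eq_zero] using h1
    have hsub : cone d B ⊆ (Submodule.span ℝ {θ0} : Submodule ℝ (Rd d)) := by
      rintro x ⟨hx0, -, hxB⟩
      have h2 : ‖x‖⁻¹ • x = θ0 := hBsub hxB
      have h3 : x = ‖x‖ • θ0 := by
        rw [← h2, smul_smul, mul_inv_cancel₀ (norm_ne_zero_iff.2 hx0), one_smul]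
      rw [SetLike.mem_coe, h3]
      exact Submodule.smul_mem _ _ (Submodule.mem_span_singleton_self θ0)
    have hspan : (Submodule.span ℝ {θ0} : Submodule ℝ (Rd d)) ≠ ⊤ := by
      intro h
      have h1 : Module.finrank ℝ (Submodule.span ℝ ({θ0} : Set (Rd d))) = 1 :=
        finrank_span_singleton (by rw [← norm_ne_zero_iff, hθ0]; norm_num)
      have h2 : Module.finrank ℝ (Rd d) = d := finrank_euclideanSpace_fin
      rw [h] at h1
      rw [finrank_top] at h1
      omega
    refine le_trans (measure_mono hsub) ?_
    rw [Measure.addHaar_submodule _ _ hspan]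
    exact zero_le
  · set δ := e.toReal with hδ
    have hδ0 : 0 < δ := ENNReal.toReal_pos he0 hee
    have hδ1 : δ ≤ 1 := by
      rw [hδ, ← ENNReal.toReal_one]
      exact ENNReal.toReal_mono ENNReal.one_ne_top he
    have hB' : B ⊆ Metric.closedBall θ0 δ := by
      intro θ hθ
      have h1 : edist θ θ0 ≤ e := le_trans (EMetric.edist_le_diam_of_mem hθ hθ0B) hBe
      rw [Metric.mem_closedBall, dist_edist]
      exact ENNReal.toReal_mono hee h1
    refine le_trans (cone_ball hd hθ0 hδ0 hδ1 hB') ?_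
    have hδe : ENNReal.ofReal (δ ^ (d - 1)) = e ^ ((d : ℝ) - 1) := by
      have h1 : ((d : ℝ) - 1) = ((d - 1 : ℕ) : ℝ) := by
        have : 1 ≤ d := by omega
        push_cast [this]; ring
      rw [h1, ← ENNReal.ofReal_toReal hee, ← hδ, ENNReal.ofReal_rpow_of_pos hδ0,
        Real.rpow_natCast]
    rw [ENNReal.ofReal_mul (by positivity), mul_right_comm, hδe]

lemma cone_le_hausdorff (hd : 2 ≤ d) {B : Set (Rd d)} (hB : B ⊆ Metric.sphere (0 : Rd d) 1) :
    volume (cone d B) ≤ ENNReal.ofReal ((3 : ℝ) ^ (d + 1)) * volume (Metric.ball (0 : Rd d) 1)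
      * μH[(d : ℝ) - 1] B := by
  haveI : Nontrivial (Rd d) := by
    have : Module.finrank ℝ (Rd d) = d := finrank_euclideanSpace_fin
    exact Module.nontrivial_of_finrank_pos (R := ℝ) (by omega)
  set C : ℝ≥0∞ := ENNReal.ofReal ((3 : ℝ) ^ (d + 1)) * volume (Metric.ball (0 : Rd d) 1) with hC
  have hC0 : C ≠ 0 := by
    refine mul_ne_zero ?_ (Metric.measure_ball_pos _ _ one_pos).ne'
    rw [Ne, ENNReal.ofReal_eq_zero, not_le]
    positivity
  have hCt : C ≠ ∞ := ENNReal.mul_ne_top ENNReal.ofReal_ne_top measure_ball_lt_top.ne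
  have key : ∀ t : ℕ → Set (Rd d), (B ⊆ ⋃ n, t n) → (∀ n, EMetric.diam (t n) ≤ 1) →
      volume (cone d B) ≤
        C * ∑' n, ⨆ _ : (t n).Nonempty, EMetric.diam (t n) ^ ((d : ℝ) - 1) := by
    intro t hcov hdiam
    have h1 : cone d B ⊆ ⋃ n, cone d (B ∩ t n) := by
      rintro x ⟨hx0, hx2, hxB⟩
      obtain ⟨n, hn⟩ := mem_iUnion.1 (hcov hxB)
      exact mem_iUnion.2 ⟨n, hx0, hx2, hxB, hn⟩
    refine le_trans (le_trans (measure_mono h1) (measure_iUnion_le _)) ?_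
    rw [← ENNReal.tsum_mul_left]
    refine ENNReal.tsum_le_tsum fun n => ?_
    rcases (B ∩ t n).eq_empty_or_nonempty with hemp | hne
    · have hconeemp : cone d (B ∩ t n) = ∅ := by
        ext x
        simp only [cone, hemp, mem_empty_iff_false, mem_setOf_eq, iff_false]
        tauto
      simp [hconeemp]
    · have hnet : (t n).Nonempty := hne.imp fun x hx => hx.2
      rw [iSup_pos hnet]
      exact le_trans (cone_diam hd (le_trans inter_subset_left hB) (hdiam n)
        (le_trans (EMetric.diam_mono inter_subset_right) le_rfl)) le_rfl
  have h2 : volume (cone d B) / C ≤ μH[(d : ℝ) - 1] B := by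
    rw [Measure.hausdorffMeasure_apply]
    refine le_trans (?_ : _ ≤ ⨅ (t : ℕ → Set (Rd d)) (_ : B ⊆ ⋃ n, t n)
        (_ : ∀ n, EMetric.diam (t n) ≤ 1), ∑' n, ⨆ _ : (t n).Nonempty,
          EMetric.diam (t n) ^ ((d : ℝ) - 1)) ?_
    · refine le_iInf fun t => le_iInf fun hcov => le_iInf fun hdiam => ?_
      exact ENNReal.div_le_of_le_mul' (key t hcov hdiam)
    · exact le_iSup₂ (f := fun (r : ℝ≥0∞) (_ : 0 < r) => ⨅ (t : ℕ → Set (Rd d))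
        (_ : B ⊆ ⋃ n, t n) (_ : ∀ n, EMetric.diam (t n) ≤ r), ∑' n, ⨆ _ : (t n).Nonempty,
          EMetric.diam (t n) ^ ((d : ℝ) - 1)) 1 zero_lt_one
  calc volume (cone d B) = C * (volume (cone d B) / C) := by
        rw [ENNReal.mul_div_cancel hC0 hCt]
    _ ≤ C * μH[(d : ℝ) - 1] B := mul_le_mul_right h2 C

/-- The unit annulus. -/
def ann (d : ℕ) : Set (Rd d) := {x : Rd d | 1 / 2 ≤ ‖x‖ ∧ ‖x‖ ≤ 2}

lemma measurableSet_ann : MeasurableSet (ann d) := by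
  have : ann d = (fun x : Rd d => ‖x‖) ⁻¹' (Set.Icc (1 / 2) 2) := by
    ext x; simp [ann, Set.mem_Icc]
  rw [this]
  exact measurable_norm measurableSet_Icc

lemma measurable_phi : Measurable (fun x : Rd d => ‖x‖⁻¹ • x) :=
  (measurable_norm.inv).smul measurable_id

lemma map_phi_le (hd : 2 ≤ d) :
    Measure.map (fun x : Rd d => ‖x‖⁻¹ • x) (volume.restrict (ann d)) ≤
      (ENNReal.ofReal ((3 : ℝ) ^ (d + 1)) * volume (Metric.ball (0 : Rd d) 1)) •
        sphereMeasure d := by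
  refine Measure.le_iff.2 fun A hA => ?_
  rw [Measure.map_apply measurable_phi hA, Measure.restrict_apply (measurable_phi hA)]
  have hsub : (fun x : Rd d => ‖x‖⁻¹ • x) ⁻¹' A ∩ ann d ⊆
      cone d (A ∩ Metric.sphere (0 : Rd d) 1) := by
    rintro x ⟨hxA, hx1, hx2⟩
    have hx0 : x ≠ 0 := by
      intro h; rw [h] at hx1; norm_num at hx1
    refine ⟨hx0, hx2, hxA, ?_⟩
    have : ‖‖x‖⁻¹ • x‖ = 1 := by
      rw [norm_smul, Real.norm_eq_abs, abs_of_pos (by positivity : (0:ℝ) < ‖x‖⁻¹),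
        inv_mul_cancel₀ (norm_ne_zero_iff.2 hx0)]
    simpa using this
  refine le_trans (measure_mono hsub)
    (le_trans (cone_le_hausdorff hd inter_subset_right) ?_)
  rw [Measure.smul_apply, smul_eq_mul]
  refine mul_le_mul_right ?_ _
  rw [sphereMeasure, Measure.restrict_apply hA]

lemma lintegral_sphere_comp (hd : 2 ≤ d) {g : Rd d → ℝ}
    (hg : AEMeasurable g (sphereMeasure d)) :
    AEMeasurable (fun x : Rd d => g (‖x‖⁻¹ • x)) (volume.restrict (ann d)) ∧
    ∫⁻ x in ann d, ENNReal.ofReal |g (‖x‖⁻¹ • x)| ≤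
      (ENNReal.ofReal ((3 : ℝ) ^ (d + 1)) * volume (Metric.ball (0 : Rd d) 1)) *
        ∫⁻ θ, ENNReal.ofReal |g θ| ∂(sphereMeasure d) := by
  set C : ℝ≥0∞ := ENNReal.ofReal ((3 : ℝ) ^ (d + 1)) * volume (Metric.ball (0 : Rd d) 1)
  have hle := map_phi_le (d := d) hd
  have hgC : AEMeasurable g (C • sphereMeasure d) := hg.smul_measure C
  have hgν : AEMeasurable g (Measure.map (fun x : Rd d => ‖x‖⁻¹ • x) (volume.restrict (ann d))) :=
    hgC.mono_measure hle
  have hcomp : AEMeasurable (fun x : Rd d => g (‖x‖⁻¹ • x)) (volume.restrict (ann d)) :=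
    hgν.comp_aemeasurable measurable_phi.aemeasurable
  refine ⟨hcomp, ?_⟩
  have hG : AEMeasurable (fun θ => ENNReal.ofReal |g θ|)
      (Measure.map (fun x : Rd d => ‖x‖⁻¹ • x) (volume.restrict (ann d))) :=
    (ENNReal.measurable_ofReal.comp measurable_abs).comp_aemeasurable hgν
  calc ∫⁻ x in ann d, ENNReal.ofReal |g (‖x‖⁻¹ • x)|
      = ∫⁻ θ, ENNReal.ofReal |g θ|
          ∂(Measure.map (fun x : Rd d => ‖x‖⁻¹ • x) (volume.restrict (ann d))) :=
        (lintegral_map' hG measurable_phi.aemeasurable).symm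
    _ ≤ ∫⁻ θ, ENNReal.ofReal |g θ| ∂(C • sphereMeasure d) := lintegral_mono' hle le_rfl
    _ = C * ∫⁻ θ, ENNReal.ofReal |g θ| ∂(sphereMeasure d) := lintegral_smul_measure _ _

lemma measurable_truncFn (i : ℕ) : Measurable (fun r : ℝ =>
    if i = 0 then (if |r| ≤ 1 then r else 0)
    else (if (2 : ℝ) ^ ((i : ℤ) - 1) < |r| ∧ |r| ≤ 2 ^ i then r else 0)) := by
  rcases eq_or_ne i 0 with rfl | hi
  · have heq : (fun r : ℝ =>
        if (0 : ℕ) = 0 then (if |r| ≤ 1 then r else 0)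
        else (if (2 : ℝ) ^ (((0 : ℕ) : ℤ) - 1) < |r| ∧ |r| ≤ 2 ^ (0 : ℕ) then r else 0)) =
        fun r : ℝ => if |r| ≤ 1 then r else 0 := by
      funext r; rw [if_pos rfl]
    rw [heq]
    have h1 : MeasurableSet {r : ℝ | |r| ≤ 1} := measurableSet_le measurable_abs measurable_const
    exact Measurable.ite h1 measurable_id measurable_const
  · have heq : (fun r : ℝ =>
        if i = 0 then (if |r| ≤ 1 then r else 0)
        else (if (2 : ℝ) ^ ((i : ℤ) - 1) < |r| ∧ |r| ≤ 2 ^ i then r else 0)) =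
        fun r : ℝ => if (2 : ℝ) ^ ((i : ℤ) - 1) < |r| ∧ |r| ≤ 2 ^ i then r else 0 := by
      funext r; rw [if_neg hi]
    rw [heq]
    have h1 : MeasurableSet {r : ℝ | (2 : ℝ) ^ ((i : ℤ) - 1) < |r| ∧ |r| ≤ 2 ^ i} :=
      (measurableSet_lt measurable_const measurable_abs).inter
        (measurableSet_le measurable_abs measurable_const)
    exact Measurable.ite h1 measurable_id measurable_const

lemma omegaTrunc_eq_comp (Ω : Rd d → ℝ) (i : ℕ) :
    OmegaTrunc Ω i = (fun r : ℝ =>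
      if i = 0 then (if |r| ≤ 1 then r else 0)
      else (if (2 : ℝ) ^ ((i : ℤ) - 1) < |r| ∧ |r| ≤ 2 ^ i then r else 0)) ∘ Ω := rfl

lemma aemeasurable_omegaTrunc {Ω : Rd d → ℝ} (hΩ : MemL1Sphere Ω) (i : ℕ) :
    AEMeasurable (OmegaTrunc Ω i) (sphereMeasure d) := by
  rw [omegaTrunc_eq_comp]
  exact (measurable_truncFn i).comp_aemeasurable hΩ.aemeasurable

lemma abs_omegaTrunc_le (Ω : Rd d → ℝ) (i : ℕ) (θ : Rd d) :
    |OmegaTrunc Ω i θ| ≤ |Ω θ| := by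
  unfold OmegaTrunc
  split_ifs <;> simp [abs_nonneg]

lemma integrable_omegaTrunc {Ω : Rd d → ℝ} (hΩ : MemL1Sphere Ω) (i : ℕ) :
    Integrable (OmegaTrunc Ω i) (sphereMeasure d) :=
  hΩ.mono ((aemeasurable_omegaTrunc hΩ i).aestronglyMeasurable)
    (Filter.Eventually.of_forall fun θ => by
      simpa [Real.norm_eq_abs] using abs_omegaTrunc_le Ω i θ)

lemma sphereL1_nonneg (g : Rd d → ℝ) : 0 ≤ sphereL1 g :=
  integral_nonneg fun θ => abs_nonneg _

lemma ofReal_sphereL1 {Ω : Rd d → ℝ} (hΩ : MemL1Sphere Ω) (i : ℕ) :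
    ENNReal.ofReal (sphereL1 (OmegaTrunc Ω i)) =
      ∫⁻ θ, ENNReal.ofReal |OmegaTrunc Ω i θ| ∂(sphereMeasure d) :=
  ofReal_integral_eq_lintegral_ofReal (integrable_omegaTrunc hΩ i).abs
    (Filter.Eventually.of_forall fun θ => abs_nonneg _)

lemma Kji_est (hd : 2 ≤ d) {η : Rd d → ℝ} (hηc : Continuous η)
    (hηsupp : tsupport η ⊆ {x : Rd d | 1 / 2 ≤ ‖x‖ ∧ ‖x‖ ≤ 2})
    {Mη : ℝ} (hMη : ∀ x, |η x| ≤ Mη)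
    {Ω : Rd d → ℝ} (hΩ : MemL1Sphere Ω) (i : ℕ) (j : ℤ) :
    AEStronglyMeasurable (Kji Ω η i j) volume ∧
    ∫⁻ x, (‖Kji Ω η i j x‖₊ : ℝ≥0∞) ≤
      ENNReal.ofReal ((2 : ℝ) ^ (-j)) * (ENNReal.ofReal (Mη * 2 ^ (d + 1)) *
        (ENNReal.ofReal ((3 : ℝ) ^ (d + 1)) * volume (Metric.ball (0 : Rd d) 1)) *
        ENNReal.ofReal (sphereL1 (OmegaTrunc Ω i))) := by
  set c : ℝ := (2 : ℝ) ^ (-j) with hcdef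
  have hc : 0 < c := by positivity
  set F : Rd d → ℝ := fun u => OmegaTrunc Ω i (‖u‖⁻¹ • u) / ‖u‖ ^ (d + 1) * η u with hF
  have hKeq : ∀ x, Kji Ω η i j x = c ^ (d + 1) * F (c • x) := by
    intro x
    rcases eq_or_ne x 0 with rfl | hx0
    · simp only [Kji, F, smul_zero, norm_zero, zero_pow (by omega : d + 1 ≠ 0), div_zero,
        zero_mul, mul_zero]
    · have hxpos : (0 : ℝ) < ‖x‖ := norm_pos_iff.2 hx0
      have hφ : ‖c • x‖⁻¹ • (c • x) = ‖x‖⁻¹ • x := by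
        rw [norm_smul, Real.norm_eq_abs, abs_of_pos hc, smul_smul]
        congr 1
        rw [mul_inv, mul_comm c⁻¹, mul_assoc, inv_mul_cancel₀ hc.ne', mul_one]
      have hnorm : ‖c • x‖ ^ (d + 1) = c ^ (d + 1) * ‖x‖ ^ (d + 1) := by
        rw [norm_smul, Real.norm_eq_abs, abs_of_pos hc, mul_pow]
      have hxn : ‖x‖ ≠ 0 := norm_ne_zero_iff.2 hx0
      show OmegaTrunc Ω i (‖x‖⁻¹ • x) / ‖x‖ ^ (d + 1) * η (c • x) = _
      rw [hF]
      simp only [hφ, hnorm]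
      field_simp
  have hgANN := lintegral_sphere_comp (d := d) hd (aemeasurable_omegaTrunc hΩ i)
  have hann_eq : ann d = {x : Rd d | 1 / 2 ≤ ‖x‖ ∧ ‖x‖ ≤ 2} := rfl
  have hFind : F = (ann d).indicator F := by
    funext u
    by_cases hu : u ∈ ann d
    · rw [Set.indicator_of_mem hu]
    · rw [Set.indicator_of_notMem hu]
      have hη0 : η u = 0 := by
        by_contra h
        exact hu (hann_eq ▸ hηsupp (subset_tsupport η (show u ∈ Function.support η from h)))
      simp [hF, hη0]
  have hFmeas : AEStronglyMeasurable F volume := by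
    rw [hFind]
    rw [aestronglyMeasurable_indicator_iff measurableSet_ann]
    exact (((hgANN.1).div ((measurable_norm.pow_const (d + 1)).aemeasurable)).mul
      hηc.measurable.aemeasurable).aestronglyMeasurable
  have hcomp_meas : AEStronglyMeasurable (fun x => F (c • x)) volume :=
    hFmeas.comp_quasiMeasurePreserving (Measure.quasiMeasurePreserving_smul volume hc.ne')
  constructor
  · exact ((hcomp_meas.const_mul (c ^ (d + 1)))).congr
      (Filter.Eventually.of_forall fun x => (hKeq x).symm)
  · have hFbound : ∀ u ∈ ann d, ENNReal.ofReal |F u| ≤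
        ENNReal.ofReal (Mη * 2 ^ (d + 1)) * ENNReal.ofReal |OmegaTrunc Ω i (‖u‖⁻¹ • u)| := by
      intro u hu
      rw [← ENNReal.ofReal_mul (by
        have := (abs_nonneg (η u)).trans (hMη u)
        positivity)]
      refine ENNReal.ofReal_le_ofReal ?_
      have hu1 : (1 : ℝ) / 2 ≤ ‖u‖ := hu.1
      have hupow : ((1 : ℝ) / 2) ^ (d + 1) ≤ ‖u‖ ^ (d + 1) := by
        gcongr <;> norm_num
      have hupos : (0 : ℝ) < ‖u‖ ^ (d + 1) := lt_of_lt_of_le (by positivity) hupow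
      have hinv : (‖u‖ ^ (d + 1))⁻¹ ≤ 2 ^ (d + 1) := by
        rw [inv_le_comm₀ hupos (by positivity)]
        calc ((2 : ℝ) ^ (d + 1))⁻¹ = ((1 : ℝ) / 2) ^ (d + 1) := by
              rw [one_div, inv_pow]
          _ ≤ ‖u‖ ^ (d + 1) := hupow
      calc |F u| = |OmegaTrunc Ω i (‖u‖⁻¹ • u)| * (‖u‖ ^ (d + 1))⁻¹ * |η u| := by
            rw [hF]
            simp only [abs_mul, abs_div]
            rw [abs_of_pos hupos, div_eq_mul_inv]
        _ ≤ |OmegaTrunc Ω i (‖u‖⁻¹ • u)| * 2 ^ (d + 1) * Mη := by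
            have h0 : (0 : ℝ) ≤ |OmegaTrunc Ω i (‖u‖⁻¹ • u)| := abs_nonneg _
            have h1 : (0 : ℝ) ≤ (‖u‖ ^ (d + 1))⁻¹ := by positivity
            refine mul_le_mul (mul_le_mul le_rfl hinv h1 h0) (hMη u) (abs_nonneg _) ?_
            positivity
        _ = Mη * 2 ^ (d + 1) * |OmegaTrunc Ω i (‖u‖⁻¹ • u)| := by ring
    have habs : ∀ x : Rd d, (‖Kji Ω η i j x‖₊ : ℝ≥0∞) =
        ENNReal.ofReal (c ^ (d + 1)) * ENNReal.ofReal |F (c • x)| := by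
      intro x
      rw [← ofReal_norm_eq_coe_nnnorm, Real.norm_eq_abs, hKeq x, abs_mul,
        abs_of_pos (by positivity : (0:ℝ) < c ^ (d + 1)), ENNReal.ofReal_mul (by positivity)]
    calc ∫⁻ x, (‖Kji Ω η i j x‖₊ : ℝ≥0∞)
        = ENNReal.ofReal (c ^ (d + 1)) * ∫⁻ x, ENNReal.ofReal |F (c • x)| := by
          simp_rw [habs]
          exact lintegral_const_mul' _ _ ENNReal.ofReal_ne_top
      _ = ENNReal.ofReal (c ^ (d + 1)) * (ENNReal.ofReal |((c ^ d)⁻¹)| *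
            ∫⁻ u, ENNReal.ofReal |F u|) := by
          congr 1
          have hmap := Measure.map_addHaar_smul (volume : Measure (Rd d)) hc.ne'
          rw [finrank_euclideanSpace_fin] at hmap
          have hAEM : AEMeasurable (fun u : Rd d => ENNReal.ofReal |F u|)
              (Measure.map (fun x : Rd d => c • x) volume) := by
            rw [hmap]
            exact ((ENNReal.measurable_ofReal.comp measurable_abs).comp_aemeasurable
              (hFmeas.aemeasurable)).smul_measure _
          rw [← lintegral_map' hAEM (measurable_const_smul c).aemeasurable, hmap,
            lintegral_smul_measure, smul_eq_mul]
      _ ≤ ENNReal.ofReal (c ^ (d + 1)) * (ENNReal.ofReal |((c ^ d)⁻¹)| *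
            (ENNReal.ofReal (Mη * 2 ^ (d + 1)) *
              ((ENNReal.ofReal ((3 : ℝ) ^ (d + 1)) * volume (Metric.ball (0 : Rd d) 1)) *
                ENNReal.ofReal (sphereL1 (OmegaTrunc Ω i))))) := by
          refine mul_le_mul_right (mul_le_mul_right ?_ _) _
          have hstep : ∫⁻ u, ENNReal.ofReal |F u| =
              ∫⁻ u in ann d, ENNReal.ofReal |F u| := by
            conv_lhs => rw [hFind]
            rw [← lintegral_indicator measurableSet_ann]
            refine lintegral_congr fun u => ?_
            by_cases hu : u ∈ ann d <;>
              simp [Set.indicator_of_mem, Set.indicator_of_notMem, hu]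
          rw [hstep]
          calc ∫⁻ u in ann d, ENNReal.ofReal |F u|
              ≤ ∫⁻ u in ann d, ENNReal.ofReal (Mη * 2 ^ (d + 1)) *
                  ENNReal.ofReal |OmegaTrunc Ω i (‖u‖⁻¹ • u)| := by
                refine lintegral_mono_ae ?_
                filter_upwards [ae_restrict_mem measurableSet_ann] with u hu
                exact hFbound u hu
            _ = ENNReal.ofReal (Mη * 2 ^ (d + 1)) *
                  ∫⁻ u in ann d, ENNReal.ofReal |OmegaTrunc Ω i (‖u‖⁻¹ • u)| :=
                lintegral_const_mul' _ _ ENNReal.ofReal_ne_top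
            _ ≤ ENNReal.ofReal (Mη * 2 ^ (d + 1)) *
                  ((ENNReal.ofReal ((3 : ℝ) ^ (d + 1)) * volume (Metric.ball (0 : Rd d) 1)) *
                    ENNReal.ofReal (sphereL1 (OmegaTrunc Ω i))) := by
                refine mul_le_mul_right ?_ _
                rw [ofReal_sphereL1 hΩ i]
                exact hgANN.2
      _ = ENNReal.ofReal ((2 : ℝ) ^ (-j)) * (ENNReal.ofReal (Mη * 2 ^ (d + 1)) *
            (ENNReal.ofReal ((3 : ℝ) ^ (d + 1)) * volume (Metric.ball (0 : Rd d) 1)) *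
            ENNReal.ofReal (sphereL1 (OmegaTrunc Ω i))) := by
          rw [← mul_assoc, ← ENNReal.ofReal_mul (by positivity)]
          have : c ^ (d + 1) * |(c ^ d)⁻¹| = c := by
            rw [abs_of_pos (by positivity), pow_succ]
            field_simp
          rw [this, ← hcdef]
          ring

section Psi

variable {ψ : Rd d → ℝ}

lemma psiT_nonneg (hψ : PsiHyp ψ) (t : ℝ) (x : Rd d) : 0 ≤ psiT ψ t x :=
  mul_nonneg (by positivity) (hψ.1 _)

lemma psiT_cont (hψ : PsiHyp ψ) (t : ℝ) : Continuous (psiT ψ t) :=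
  continuous_const.mul (hψ.2.1.continuous.comp (continuous_const_smul _))

lemma psiT_supp (hψ : PsiHyp ψ) (t : ℝ) {x : Rd d}
    (hx : (2 : ℝ) ^ (-t) * 4⁻¹ < ‖x‖) : psiT ψ t x = 0 := by
  have ht : (0 : ℝ) < (2 : ℝ) ^ t := Real.rpow_pos_of_pos two_pos t
  have hz : ψ ((2 : ℝ) ^ t • x) = 0 := by
    apply image_eq_zero_of_notMem_tsupport
    intro hmem
    have h1 := hψ.2.2.2.2.1 hmem
    rw [Metric.mem_closedBall, dist_zero_right, norm_smul, Real.norm_eq_abs,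
      abs_of_pos ht] at h1
    have h2 : ‖x‖ ≤ (2 : ℝ) ^ (-t) * 4⁻¹ := by
      rw [Real.rpow_neg (by norm_num : (0:ℝ) ≤ 2)]
      nlinarith [inv_mul_cancel₀ ht.ne', inv_pos.2 ht,
        mul_le_mul_of_nonneg_left h1 (inv_pos.2 ht).le]
    linarith
  simp [psiT, hz]

lemma psiT_hcs (hψ : PsiHyp ψ) (t : ℝ) : HasCompactSupport (psiT ψ t) := by
  apply HasCompactSupport.intro (isCompact_closedBall (0 : Rd d) ((2 : ℝ) ^ (-t) * 4⁻¹))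
  intro x hx
  rw [Metric.mem_closedBall, dist_zero_right, not_le] at hx
  exact psiT_supp hψ t hx

lemma psiT_integrable (hψ : PsiHyp ψ) (t : ℝ) : Integrable (psiT ψ t) volume :=
  (psiT_cont hψ t).integrable_of_hasCompactSupport (psiT_hcs hψ t)

lemma psiT_integral (hψ : PsiHyp ψ) (t : ℝ) : ∫ x, psiT ψ t x = 1 := by
  have h2 : (0 : ℝ) ≤ 2 := by norm_num
  have hpos : (0 : ℝ) < ((2 : ℝ) ^ t) ^ d := by positivity
  unfold psiT
  rw [integral_const_mul, Measure.integral_comp_smul volume ψ ((2 : ℝ) ^ t),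
    finrank_euclideanSpace_fin, hψ.2.2.2.2.2, smul_eq_mul, mul_one,
    abs_of_pos (inv_pos.2 hpos)]
  have hh : ((2 : ℝ) ^ t) ^ d = (2 : ℝ) ^ (t * (d : ℝ)) := by
    rw [Real.rpow_mul h2, Real.rpow_natCast]
  rw [hh, mul_inv_cancel₀ (Real.rpow_pos_of_pos two_pos _).ne']

lemma psiT_lintegral (hψ : PsiHyp ψ) (t : ℝ) :
    ∫⁻ x, ENNReal.ofReal (psiT ψ t x) = 1 := by
  rw [← ofReal_integral_eq_lintegral_ofReal (psiT_integrable hψ t)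
    (Filter.Eventually.of_forall (psiT_nonneg hψ t)), psiT_integral hψ t, ENNReal.ofReal_one]

lemma psiT_cont_sub (hψ : PsiHyp ψ) (t : ℝ) (x : Rd d) :
    Continuous (fun z : Rd d => psiT ψ t (x - z)) :=
  (psiT_cont hψ t).comp (continuous_const.sub continuous_id)

lemma psiT_hcs_sub (hψ : PsiHyp ψ) (t : ℝ) (x : Rd d) :
    HasCompactSupport (fun z : Rd d => psiT ψ t (x - z)) := by
  apply HasCompactSupport.intro
    (isCompact_closedBall (x : Rd d) ((2 : ℝ) ^ (-t) * 4⁻¹))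
  intro z hz
  rw [Metric.mem_closedBall, not_le] at hz
  apply psiT_supp hψ t
  rw [norm_sub_rev, ← dist_eq_norm]
  exact hz

lemma psiT_integral_sub (hψ : PsiHyp ψ) (t : ℝ) (x : Rd d) :
    ∫ z, psiT ψ t (x - z) = 1 := by
  rw [integral_sub_left_eq_self (psiT ψ t) volume x, psiT_integral hψ t]

end Psi

lemma conv_aux {g h : Rd d → ℝ} (hg : AEStronglyMeasurable g volume)
    (hh : AEStronglyMeasurable h volume) :
    AEStronglyMeasurable (fun p : Rd d × Rd d => g (p.1 - p.2) * h p.2)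
      (volume.prod volume) ∧
    ∫⁻ x, ∫⁻ y, (‖g (x - y) * h y‖₊ : ℝ≥0∞) =
      (∫⁻ x, (‖g x‖₊ : ℝ≥0∞)) * ∫⁻ y, (‖h y‖₊ : ℝ≥0∞) := by
  have hP : AEStronglyMeasurable (fun p : Rd d × Rd d => g p.1 * h p.2)
      (volume.prod volume) :=
    (hg.comp_quasiMeasurePreserving Measure.quasiMeasurePreserving_fst).mul
      (hh.comp_quasiMeasurePreserving Measure.quasiMeasurePreserving_snd)
  have hmp := measurePreserving_sub_prod (volume : Measure (Rd d)) volume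
  have hPc : AEStronglyMeasurable (fun p : Rd d × Rd d => g (p.1 - p.2) * h p.2)
      (volume.prod volume) :=
    hP.comp_quasiMeasurePreserving hmp.quasiMeasurePreserving
  refine ⟨hPc, ?_⟩
  have hunc : AEMeasurable
      (Function.uncurry fun x y => (‖g (x - y) * h y‖₊ : ℝ≥0∞)) (volume.prod volume) :=
    hPc.enorm
  rw [lintegral_lintegral_swap hunc]
  calc ∫⁻ y, ∫⁻ x, (‖g (x - y) * h y‖₊ : ℝ≥0∞)
      = ∫⁻ y, (∫⁻ x, (‖g (x - y)‖₊ : ℝ≥0∞)) * (‖h y‖₊ : ℝ≥0∞) := by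
        refine lintegral_congr fun y => ?_
        rw [← lintegral_mul_const' _ _ ENNReal.coe_ne_top]
        exact lintegral_congr fun x => by rw [nnnorm_mul, ENNReal.coe_mul]
    _ = ∫⁻ y, (∫⁻ x, (‖g x‖₊ : ℝ≥0∞)) * (‖h y‖₊ : ℝ≥0∞) := by
        refine lintegral_congr fun y => ?_
        rw [lintegral_sub_right_eq_self (fun x => (‖g x‖₊ : ℝ≥0∞)) y]
    _ = (∫⁻ x, (‖g x‖₊ : ℝ≥0∞)) * ∫⁻ y, (‖h y‖₊ : ℝ≥0∞) :=
        lintegral_const_mul'' _ hh.enorm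

theorem Jop_approx_Hop_L1_placeholder : True := trivial

end JopAux

/-- Estimate (4.3): `‖𝓙^i_{m,a;j} f − 𝓗^i_{m,a;j} f‖_{L¹} ≲ 2^{-ιs} ‖Ω_i‖_{L¹(S^{d-1})} ‖f‖_{L¹}`. -/
theorem Jop_approx_Hop_L1
    (d : ℕ) (hd : 2 ≤ d) (ψ η : Rd d → ℝ) (hψ : PsiHyp ψ) (hη : EtaHyp η)
    (a : Rd d → ℝ) (L : ℝ≥0) (ha : LipschitzWith L a)
    (ι : ℝ) (hι0 : 0 < ι) (hι1 : ι < 1)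
    (Ω : Rd d → ℝ) (hΩhom : HomogZero Ω) (hΩ1 : MemL1Sphere Ω) :
    ∃ C : ℝ, 0 < C ∧
      ∀ (i : ℕ) (j : ℤ) (m s : ℕ) (f : Rd d → ℝ), Integrable f volume →
        (∫⁻ x : Rd d, ENNReal.ofReal
            |Jop Ω η ψ a ι s i m j f x - Hop Ω η ψ a i m j f x|)
          ≤ ENNReal.ofReal (C * (2 : ℝ) ^ (-(ι * s)) * sphereL1 (OmegaTrunc Ω i)) *
              ∫⁻ x, ‖f x‖₊ := by
  classical
  obtain ⟨Mη, hMηn⟩ := hη.2.1.exists_bound_of_continuous hη.1.continuous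
  have hMη : ∀ x, |η x| ≤ Mη := fun x => by simpa [Real.norm_eq_abs] using hMηn x
  set CK : ℝ≥0∞ := ENNReal.ofReal (Mη * 2 ^ (d + 1)) *
    (ENNReal.ofReal ((3 : ℝ) ^ (d + 1)) * volume (Metric.ball (0 : Rd d) 1)) with hCK
  have hCKfin : CK ≠ ∞ :=
    ENNReal.mul_ne_top ENNReal.ofReal_ne_top
      (ENNReal.mul_ne_top ENNReal.ofReal_ne_top measure_ball_lt_top.ne)
  set Cfull : ℝ≥0∞ := ENNReal.ofReal (L : ℝ) * 2 * CK with hCfull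
  have hCfullfin : Cfull ≠ ∞ :=
    ENNReal.mul_ne_top (ENNReal.mul_ne_top ENNReal.ofReal_ne_top ENNReal.ofNat_ne_top) hCKfin
  have hCle : Cfull ≤ ENNReal.ofReal (Cfull.toReal + 1) := by
    conv_lhs => rw [← ENNReal.ofReal_toReal hCfullfin]
    exact ENNReal.ofReal_le_ofReal (by linarith)
  refine ⟨Cfull.toReal + 1, by positivity, ?_⟩
  intro i j m s f hf
  set S : ℝ := sphereL1 (OmegaTrunc Ω i) with hS
  have hS0 : 0 ≤ S := JopAux.sphereL1_nonneg _
  have hKji := JopAux.Kji_est hd hη.1.continuous hη.2.2.1 hMη hΩ1 i j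
  set ϕ : Rd d → ℝ := fun y => psiT ψ ((2 : ℝ) ^ (m : ℝ) - (j : ℝ)) y -
    psiT ψ ((2 : ℝ) ^ ((m : ℝ) - 1) - (j : ℝ)) y with hϕdef
  have hϕc : Continuous ϕ := (JopAux.psiT_cont hψ _).sub (JopAux.psiT_cont hψ _)
  have hϕ2 : ∫⁻ y, (‖ϕ y‖₊ : ℝ≥0∞) ≤ 2 := by
    have hb : ∀ y, (‖ϕ y‖₊ : ℝ≥0∞) ≤
        ENNReal.ofReal (psiT ψ ((2 : ℝ) ^ (m : ℝ) - (j : ℝ)) y) +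
          ENNReal.ofReal (psiT ψ ((2 : ℝ) ^ ((m : ℝ) - 1) - (j : ℝ)) y) := by
      intro y
      rw [← ofReal_norm_eq_coe_nnnorm, Real.norm_eq_abs,
        ← ENNReal.ofReal_add (JopAux.psiT_nonneg hψ _ _) (JopAux.psiT_nonneg hψ _ _)]
      refine ENNReal.ofReal_le_ofReal ?_
      refine le_trans (abs_sub _ _) ?_
      rw [abs_of_nonneg (JopAux.psiT_nonneg hψ _ _), abs_of_nonneg (JopAux.psiT_nonneg hψ _ _)]
    calc ∫⁻ y, (‖ϕ y‖₊ : ℝ≥0∞)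
        ≤ ∫⁻ y, (ENNReal.ofReal (psiT ψ ((2 : ℝ) ^ (m : ℝ) - (j : ℝ)) y) +
            ENNReal.ofReal (psiT ψ ((2 : ℝ) ^ ((m : ℝ) - 1) - (j : ℝ)) y)) :=
          lintegral_mono hb
      _ = 1 + 1 := by
          rw [lintegral_add_left ((JopAux.psiT_cont hψ _).measurable.ennreal_ofReal),
            JopAux.psiT_lintegral hψ _, JopAux.psiT_lintegral hψ _]
      _ = 2 := one_add_one_eq_two
  set Kt := KtildeIJM Ω η ψ i j m with hKtdef
  have hconv1 := JopAux.conv_aux hKji.1 hϕc.aestronglyMeasurable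
  have hKteq : Kt = fun x => ∫ y, Kji Ω η i j (x - y) * ϕ y := rfl
  have hKtmeas : AEStronglyMeasurable Kt volume := by
    rw [hKteq]
    exact hconv1.1.integral_prod_right'
  set κ : ℝ≥0∞ := ∫⁻ x, (‖Kt x‖₊ : ℝ≥0∞) with hκdef
  have hκle : κ ≤ ENNReal.ofReal ((2 : ℝ) ^ (-j)) * (CK * ENNReal.ofReal S) * 2 := by
    have h1 : κ ≤ ∫⁻ x, ∫⁻ y, (‖Kji Ω η i j (x - y) * ϕ y‖₊ : ℝ≥0∞) := by
      rw [hκdef]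
      refine lintegral_mono fun x => ?_
      have hx : Kt x = ∫ y, Kji Ω η i j (x - y) * ϕ y := rfl
      rw [hx]
      exact enorm_integral_le_lintegral_enorm _
    refine le_trans h1 ?_
    rw [hconv1.2]
    refine mul_le_mul' ?_ hϕ2
    refine le_trans hKji.2 (le_of_eq ?_)
    simp only [hCK, hS]
  have hκfin : κ ≠ ∞ := by
    refine ne_top_of_le_ne_top ?_ hκle
    exact ENNReal.mul_ne_top (ENNReal.mul_ne_top ENNReal.ofReal_ne_top
      (ENNReal.mul_ne_top hCKfin ENNReal.ofReal_ne_top)) ENNReal.ofNat_ne_top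
  set t : ℝ := ι * s + 3 - (j : ℝ) with htdef
  have h2t : (0 : ℝ) < (2 : ℝ) ^ (-t) := Real.rpow_pos_of_pos two_pos _
  have hint0 : ∀ x : Rd d, Integrable (fun z => psiT ψ t (x - z)) volume := fun x =>
    (JopAux.psiT_cont_sub hψ t x).integrable_of_hasCompactSupport
      (JopAux.psiT_hcs_sub hψ t x)
  have hint1 : ∀ x y : Rd d,
      Integrable (fun z => psiT ψ t (x - z) * (a z - a y)) volume := by
    intro x y
    refine ((JopAux.psiT_cont_sub hψ t x).mul
      (ha.continuous.sub continuous_const)).integrable_of_hasCompactSupport ?_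
    exact (JopAux.psiT_hcs_sub hψ t x).mul_right
  set cf : Rd d → ℝ := fun x => ∫ z, psiT ψ t (x - z) * (a z - a x) with hcfdef
  have hcb : ∀ x, |cf x| ≤ (L : ℝ) * (2 : ℝ) ^ (-t) := by
    intro x
    have hpt : ∀ z, |psiT ψ t (x - z) * (a z - a x)| ≤
        ((L : ℝ) * ((2 : ℝ) ^ (-t) * 4⁻¹)) * psiT ψ t (x - z) := by
      intro z
      by_cases hz : (2 : ℝ) ^ (-t) * 4⁻¹ < ‖x - z‖
      · rw [JopAux.psiT_supp hψ t hz]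
        simp
      · push_neg at hz
        rw [abs_mul, abs_of_nonneg (JopAux.psiT_nonneg hψ t _)]
        have hza : |a z - a x| ≤ (L : ℝ) * ((2 : ℝ) ^ (-t) * 4⁻¹) := by
          calc |a z - a x| ≤ (L : ℝ) * dist z x := by
                simpa [Real.dist_eq] using ha.dist_le_mul z x
            _ = (L : ℝ) * ‖x - z‖ := by rw [dist_eq_norm, norm_sub_rev]
            _ ≤ (L : ℝ) * ((2 : ℝ) ^ (-t) * 4⁻¹) := by
                exact mul_le_mul_of_nonneg_left hz L.coe_nonneg
        calc psiT ψ t (x - z) * |a z - a x|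
            ≤ psiT ψ t (x - z) * ((L : ℝ) * ((2 : ℝ) ^ (-t) * 4⁻¹)) :=
              mul_le_mul_of_nonneg_left hza (JopAux.psiT_nonneg hψ t _)
          _ = ((L : ℝ) * ((2 : ℝ) ^ (-t) * 4⁻¹)) * psiT ψ t (x - z) := by ring
    calc |cf x| ≤ ∫ z, |psiT ψ t (x - z) * (a z - a x)| := by
          rw [hcfdef]
          simpa only [Real.norm_eq_abs] using
            norm_integral_le_integral_norm (μ := volume)
              (fun z => psiT ψ t (x - z) * (a z - a x))
      _ ≤ ∫ z, ((L : ℝ) * ((2 : ℝ) ^ (-t) * 4⁻¹)) * psiT ψ t (x - z) :=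
          integral_mono (hint1 x x).abs ((hint0 x).const_mul _) hpt
      _ = ((L : ℝ) * ((2 : ℝ) ^ (-t) * 4⁻¹)) * ∫ z, psiT ψ t (x - z) :=
          integral_const_mul _ _
      _ = (L : ℝ) * ((2 : ℝ) ^ (-t) * 4⁻¹) := by
          rw [JopAux.psiT_integral_sub hψ t x, mul_one]
      _ ≤ (L : ℝ) * (2 : ℝ) ^ (-t) := by nlinarith [L.coe_nonneg, h2t]
  have hrsa : ∀ x y : Rd d, Rsa ψ a ι s j x y = cf x + (a x - a y) := by
    intro x y
    have h0 : Rsa ψ a ι s j x y = ∫ z, psiT ψ t (x - z) * (a z - a y) := rfl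
    have h1 : (fun z => psiT ψ t (x - z) * (a z - a y)) =
        fun z => psiT ψ t (x - z) * (a z - a x) + psiT ψ t (x - z) * (a x - a y) := by
      funext z; ring
    rw [h0, h1, integral_add (hint1 x x) ((hint0 x).mul_const _), integral_mul_const,
      JopAux.psiT_integral_sub hψ t x, one_mul, hcfdef]
  have h2jpos : (0 : ℝ) < (2 : ℝ) ^ (j : ℝ) := Real.rpow_pos_of_pos two_pos _
  have hKj0 : ∀ u : Rd d, (2 : ℝ) ^ (j : ℝ) * 2 < ‖u‖ → Kji Ω η i j u = 0 := by
    intro u hu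
    have hcpos : (0 : ℝ) < (2 : ℝ) ^ (-j) := by positivity
    have hη0 : η ((2 : ℝ) ^ (-j) • u) = 0 := by
      apply image_eq_zero_of_notMem_tsupport
      intro hmem
      have h1 := hη.2.2.1 hmem
      have h2 : ‖(2 : ℝ) ^ (-j) • u‖ = (2 : ℝ) ^ (-(j : ℝ)) * ‖u‖ := by
        rw [norm_smul, Real.norm_eq_abs, abs_of_pos hcpos]
        congr 1
        rw [← Real.rpow_intCast 2 (-j)]
        norm_num
      have h3 : (2 : ℝ) ^ (-(j : ℝ)) * ‖u‖ ≤ 2 := h2 ▸ h1.2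
      have hid : (2 : ℝ) ^ ((j : ℝ)) * (2 : ℝ) ^ (-(j : ℝ)) = 1 := by
        rw [← Real.rpow_add two_pos]; simp
      nlinarith [Real.rpow_pos_of_pos two_pos (-(j : ℝ))]
    unfold Kji
    rw [hη0, mul_zero]
  have hϕ0 : ∀ y : Rd d, (2 : ℝ) ^ (j : ℝ) < ‖y‖ → ϕ y = 0 := by
    intro y hy
    have haux : ∀ e : ℝ, -(e - (j : ℝ)) ≤ (j : ℝ) → psiT ψ (e - (j : ℝ)) y = 0 := by
      intro e he
      apply JopAux.psiT_supp hψ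
      refine lt_of_le_of_lt ?_ hy
      have h1 : (2 : ℝ) ^ (-(e - (j : ℝ))) ≤ (2 : ℝ) ^ ((j : ℝ)) :=
        (Real.rpow_le_rpow_left_iff one_lt_two).2 he
      nlinarith [Real.rpow_pos_of_pos two_pos (-(e - (j : ℝ)))]
    have l1 := haux ((2 : ℝ) ^ (m : ℝ)) (by
      have := Real.rpow_pos_of_pos two_pos (m : ℝ); linarith)
    have l2 := haux ((2 : ℝ) ^ ((m : ℝ) - 1)) (by
      have := Real.rpow_pos_of_pos two_pos ((m : ℝ) - 1); linarith)
    show psiT ψ ((2 : ℝ) ^ (m : ℝ) - (j : ℝ)) y -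
      psiT ψ ((2 : ℝ) ^ ((m : ℝ) - 1) - (j : ℝ)) y = 0
    rw [l1, l2, sub_zero]
  have hKt0 : ∀ x : Rd d, (2 : ℝ) ^ (j : ℝ) * 8 < ‖x‖ → Kt x = 0 := by
    intro x hx
    have hz : ∀ y : Rd d, Kji Ω η i j (x - y) * ϕ y = 0 := by
      intro y
      by_cases hy : (2 : ℝ) ^ (j : ℝ) < ‖y‖
      · rw [hϕ0 y hy, mul_zero]
      · push_neg at hy
        rw [hKj0 (x - y) ?_, zero_mul]
        have hxy : ‖x‖ ≤ ‖x - y‖ + ‖y‖ := by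
          calc ‖x‖ = ‖(x - y) + y‖ := by rw [sub_add_cancel]
            _ ≤ ‖x - y‖ + ‖y‖ := norm_add_le _ _
        nlinarith
    have hzz : (fun y => Kji Ω η i j (x - y) * ϕ y) = fun _ => (0 : ℝ) := funext hz
    have hKtx : Kt x = ∫ y, Kji Ω η i j (x - y) * ϕ y := rfl
    rw [hKtx, hzz, integral_zero]
  have hconv2 := JopAux.conv_aux hKtmeas hf.1
  have hsec : ∀ᵐ x : Rd d ∂volume,
      AEStronglyMeasurable (fun y => Kt (x - y) * f y) volume :=
    hconv2.1.prodMk_left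
  have hdouble : ∫⁻ x, ∫⁻ y, (‖Kt (x - y) * f y‖₊ : ℝ≥0∞) =
      κ * ∫⁻ y, (‖f y‖₊ : ℝ≥0∞) := hconv2.2
  have hffin : ∫⁻ y, (‖f y‖₊ : ℝ≥0∞) ≠ ∞ := hf.2.ne
  have hinnerfin : ∀ᵐ x : Rd d ∂volume,
      ∫⁻ y, (‖Kt (x - y) * f y‖₊ : ℝ≥0∞) < ∞ := by
    obtain ⟨G, hGmeas, hGae⟩ := hconv2.1.enorm
    have hmeasG : Measurable fun x : Rd d => ∫⁻ y, G (x, y) :=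
      hGmeas.lintegral_prod_right'
    have haemain : AEMeasurable
        (fun x : Rd d => ∫⁻ y, (‖Kt (x - y) * f y‖₊ : ℝ≥0∞)) volume := by
      refine ⟨fun x => ∫⁻ y, G (x, y), hmeasG, ?_⟩
      filter_upwards [Measure.ae_ae_of_ae_prod hGae] with x hx
      exact lintegral_congr_ae hx
    refine ae_lt_top' haemain ?_
    rw [hdouble]
    exact ENNReal.mul_ne_top hκfin hffin
  have key : ∀ᵐ x : Rd d ∂volume,
      ENNReal.ofReal |Jop Ω η ψ a ι s i m j f x - Hop Ω η ψ a i m j f x| ≤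
        ENNReal.ofReal ((L : ℝ) * (2 : ℝ) ^ (-t)) *
          ∫⁻ y, (‖Kt (x - y) * f y‖₊ : ℝ≥0∞) := by
    filter_upwards [hsec, hinnerfin] with x hx1 hx2
    have hint : Integrable (fun y => Kt (x - y) * f y) volume := ⟨hx1, hx2⟩
    have hbc : Continuous fun y : Rd d => a x - a y := continuous_const.sub ha.continuous
    have hhb : Integrable (fun y => (Kt (x - y) * f y) * (a x - a y)) volume := by
      refine Integrable.mono (hint.const_mul ((L : ℝ) * ((2 : ℝ) ^ (j : ℝ) * 8)))
        (hx1.mul hbc.aestronglyMeasurable) (Filter.Eventually.of_forall fun y => ?_)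
      rw [Real.norm_eq_abs, Real.norm_eq_abs]
      by_cases hy : (2 : ℝ) ^ (j : ℝ) * 8 < ‖x - y‖
      · rw [hKt0 _ hy]
        simp
      · push_neg at hy
        rw [abs_mul (Kt (x - y) * f y) (a x - a y),
          abs_mul ((L : ℝ) * ((2 : ℝ) ^ (j : ℝ) * 8)) (Kt (x - y) * f y)]
        have hb : |a x - a y| ≤ (L : ℝ) * ((2 : ℝ) ^ (j : ℝ) * 8) := by
          calc |a x - a y| ≤ (L : ℝ) * dist x y := by
                simpa [Real.dist_eq] using ha.dist_le_mul x y
            _ = (L : ℝ) * ‖x - y‖ := by rw [dist_eq_norm]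
            _ ≤ (L : ℝ) * ((2 : ℝ) ^ (j : ℝ) * 8) :=
                mul_le_mul_of_nonneg_left hy L.coe_nonneg
        calc |Kt (x - y) * f y| * |a x - a y|
            ≤ |Kt (x - y) * f y| * ((L : ℝ) * ((2 : ℝ) ^ (j : ℝ) * 8)) :=
              mul_le_mul_of_nonneg_left hb (abs_nonneg _)
          _ = |(L : ℝ) * ((2 : ℝ) ^ (j : ℝ) * 8)| * |Kt (x - y) * f y| := by
              rw [abs_of_nonneg (by positivity : (0:ℝ) ≤ (L : ℝ) * ((2 : ℝ) ^ (j : ℝ) * 8))]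
              ring
    have heqJ : Jop Ω η ψ a ι s i m j f x =
        cf x * (∫ y, Kt (x - y) * f y) + ∫ y, (Kt (x - y) * f y) * (a x - a y) := by
      have h1 : (fun y => Kt (x - y) * Rsa ψ a ι s j x y * f y) =
          fun y => cf x * (Kt (x - y) * f y) + (Kt (x - y) * f y) * (a x - a y) := by
        funext y
        rw [hrsa x y]
        ring
      have h0 : Jop Ω η ψ a ι s i m j f x =
          ∫ y, Kt (x - y) * Rsa ψ a ι s j x y * f y := rfl
      rw [h0, h1, integral_add (hint.const_mul (cf x)) hhb, integral_const_mul]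
    have heqH : Hop Ω η ψ a i m j f x = ∫ y, (Kt (x - y) * f y) * (a x - a y) := by
      have h0 : Hop Ω η ψ a i m j f x = ∫ y, Kt (x - y) * (a x - a y) * f y := rfl
      rw [h0]
      exact integral_congr_ae (Filter.Eventually.of_forall fun y => by ring)
    rw [heqJ, heqH, add_sub_cancel_right]
    calc ENNReal.ofReal |cf x * ∫ y, Kt (x - y) * f y|
        ≤ ENNReal.ofReal (((L : ℝ) * (2 : ℝ) ^ (-t)) *
            (∫⁻ y, (‖Kt (x - y) * f y‖₊ : ℝ≥0∞)).toReal) := by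
          refine ENNReal.ofReal_le_ofReal ?_
          rw [abs_mul]
          refine mul_le_mul (hcb x) ?_ (abs_nonneg _) (by positivity)
          rw [← Real.norm_eq_abs]
          refine le_trans (norm_integral_le_lintegral_norm _) (le_of_eq ?_)
          congr 1
          exact lintegral_congr fun y => ofReal_norm_eq_coe_nnnorm _
      _ ≤ ENNReal.ofReal ((L : ℝ) * (2 : ℝ) ^ (-t)) *
            ∫⁻ y, (‖Kt (x - y) * f y‖₊ : ℝ≥0∞) := by
          rw [ENNReal.ofReal_mul (by positivity)]
          exact mul_le_mul_right ENNReal.ofReal_toReal_le _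
  calc ∫⁻ x, ENNReal.ofReal |Jop Ω η ψ a ι s i m j f x - Hop Ω η ψ a i m j f x|
      ≤ ∫⁻ x, ENNReal.ofReal ((L : ℝ) * (2 : ℝ) ^ (-t)) *
          ∫⁻ y, (‖Kt (x - y) * f y‖₊ : ℝ≥0∞) := lintegral_mono_ae key
    _ = ENNReal.ofReal ((L : ℝ) * (2 : ℝ) ^ (-t)) * (κ * ∫⁻ y, (‖f y‖₊ : ℝ≥0∞)) := by
        rw [lintegral_const_mul' _ _ ENNReal.ofReal_ne_top, hdouble]
    _ ≤ ENNReal.ofReal ((L : ℝ) * (2 : ℝ) ^ (-t)) *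
          ((ENNReal.ofReal ((2 : ℝ) ^ (-j)) * (CK * ENNReal.ofReal S) * 2) *
            ∫⁻ y, (‖f y‖₊ : ℝ≥0∞)) :=
        mul_le_mul_right (mul_le_mul_left hκle _) _
    _ ≤ ENNReal.ofReal ((Cfull.toReal + 1) * (2 : ℝ) ^ (-(ι * s)) * S) *
          ∫⁻ x, (‖f x‖₊ : ℝ≥0∞) := by
        rw [← mul_assoc]
        refine mul_le_mul_left ?_ _
        have hzr : ((2 : ℝ) ^ (-j) : ℝ) = (2 : ℝ) ^ (-(j : ℝ)) := by
          have hcast : ((-j : ℤ) : ℝ) = -(j : ℝ) := by push_cast; ring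
          rw [← hcast, Real.rpow_intCast 2 (-j)]
        have hreal : (L : ℝ) * (2 : ℝ) ^ (-t) * (2 : ℝ) ^ (-(j : ℝ)) ≤
            (L : ℝ) * (2 : ℝ) ^ (-(ι * s)) := by
          rw [mul_assoc, ← Real.rpow_add two_pos]
          have he : -t + -(j : ℝ) = -(ι * s) + (-3) := by rw [htdef]; ring
          rw [he, Real.rpow_add two_pos]
          have h3 : (2 : ℝ) ^ (-3 : ℝ) ≤ 1 :=
            Real.rpow_le_one_of_one_le_of_nonpos (by norm_num) (by norm_num)
          have hp : (0 : ℝ) < (2 : ℝ) ^ (-(ι * (s : ℝ))) := Real.rpow_pos_of_pos two_pos _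
          have hstep : (2 : ℝ) ^ (-(ι * (s : ℝ))) * (2 : ℝ) ^ (-3 : ℝ) ≤
              (2 : ℝ) ^ (-(ι * (s : ℝ))) := by nlinarith [Real.rpow_pos_of_pos two_pos (-3 : ℝ)]
          exact mul_le_mul_of_nonneg_left hstep L.coe_nonneg
        calc ENNReal.ofReal ((L : ℝ) * (2 : ℝ) ^ (-t)) *
              (ENNReal.ofReal ((2 : ℝ) ^ (-j)) * (CK * ENNReal.ofReal S) * 2)
            = (ENNReal.ofReal ((L : ℝ) * (2 : ℝ) ^ (-t)) *
                ENNReal.ofReal ((2 : ℝ) ^ (-(j : ℝ)))) * 2 * CK * ENNReal.ofReal S := by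
              rw [hzr]
              ring
          _ = ENNReal.ofReal ((L : ℝ) * (2 : ℝ) ^ (-t) * (2 : ℝ) ^ (-(j : ℝ))) *
                2 * CK * ENNReal.ofReal S := by
              rw [ENNReal.ofReal_mul (by positivity : (0:ℝ) ≤ (L : ℝ) * (2 : ℝ) ^ (-t))]
          _ ≤ ENNReal.ofReal ((L : ℝ) * (2 : ℝ) ^ (-(ι * s))) * 2 * CK *
                ENNReal.ofReal S := by
              gcongr
          _ = Cfull * (ENNReal.ofReal ((2 : ℝ) ^ (-(ι * s))) * ENNReal.ofReal S) := by
              rw [ENNReal.ofReal_mul L.coe_nonneg, hCfull]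
              ring
          _ ≤ ENNReal.ofReal (Cfull.toReal + 1) *
                (ENNReal.ofReal ((2 : ℝ) ^ (-(ι * s))) * ENNReal.ofReal S) :=
              mul_le_mul_left hCle _
          _ = ENNReal.ofReal ((Cfull.toReal + 1) * (2 : ℝ) ^ (-(ι * s)) * S) := by
              rw [ENNReal.ofReal_mul (by positivity), ENNReal.ofReal_mul (by positivity),
                mul_assoc]

end
end
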